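/- With P₁, …, P_ν the stable plateaux, Γᵢ = Φ(Pᵢ, ∪_{j≠i} Pⱼ) − H(Pᵢ), and Vᵢ = {η : Φ(Pᵢ, η) − H(Pᵢ) < Γᵢ}, each Vᵢ is a cycle: it is nonempty, connected, and max_{Vᵢ} H < min_{∂Vᵢ} H. -/

import Mathlib

open SimpleGraph

variable {Ω : Type*}

/-- The height of a walk: the maximum of the energy `H` along its support. -/
noncomputable def walkHeight (H : Ω → ℝ) {G : SimpleGraph Ω} {a b : Ω} (w : G.Walk a b) : ℝ :=
  (w.support.map H).foldr max (H b)

/-- The communication height between two vertices: minimal height over all paths. -/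
noncomputable def commHeight (G : SimpleGraph Ω) (H : Ω → ℝ) (a b : Ω) : ℝ :=
  sInf {h : ℝ | ∃ w : G.Walk a b, walkHeight H w = h}

/-- Outer boundary of a set of vertices. -/
def outerBoundary (G : SimpleGraph Ω) (A : Set Ω) : Set Ω :=
  {ξ | ξ ∉ A ∧ ∃ η ∈ A, G.Adj ξ η}

/-- A (nontrivial) cycle: nonempty, connected, proper, with `max_C H < min_{∂C} H`. -/
def IsCycleSet (G : SimpleGraph Ω) (H : Ω → ℝ) (C : Set Ω) : Prop :=
  C.Nonempty ∧ (G.induce C).Connected ∧ C ≠ Set.univ ∧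
    ∀ η ∈ C, ∀ ξ ∈ outerBoundary G C, H η < H ξ

/-- A stable plateau: nonempty, connected, constant energy, strictly higher on the boundary. -/
def IsStablePlateau (G : SimpleGraph Ω) (H : Ω → ℝ) (P : Set Ω) : Prop :=
  P.Nonempty ∧ (G.induce P).Connected ∧ (∀ x ∈ P, ∀ y ∈ P, H x = H y) ∧
    ∀ x ∈ P, ∀ ζ ∈ outerBoundary G P, H x < H ζ

/-- Communication height between two sets. -/
noncomputable def commHeightSet (G : SimpleGraph Ω) (H : Ω → ℝ) (A B : Set Ω) : ℝ :=
  sInf {h : ℝ | ∃ a ∈ A, ∃ b ∈ B, commHeight G H a b = h}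

/-- The bottom of a set: the minimizers of `H` on it. -/
def bottom (H : Ω → ℝ) (C : Set Ω) : Set Ω := {x ∈ C | ∀ y ∈ C, H x ≤ H y}

/-- `A` is a connected component of `S`: a maximal nonempty connected subset of `S`. -/
def IsConnectedComponentOf (G : SimpleGraph Ω) (S A : Set Ω) : Prop :=
  A ⊆ S ∧ A.Nonempty ∧ (G.induce A).Connected ∧
    ∀ B : Set Ω, A ⊆ B → B ⊆ S → (G.induce B).Connected → B = A

/-!
A point `η` lies in `Vᵢ` exactly when some walk from `Pᵢ` to `η` stays strictly below the level
`c = Φ(Pᵢ, ∪_{j≠i} Pⱼ)`. Every point of such a walk lies in `Vᵢ` too, so `Vᵢ` is connected as soon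
as it contains the connected set `Pᵢ`; it does, because a walk leaving a stable plateau has to climb
strictly above it. A point `ξ ∉ Vᵢ` adjacent to `Vᵢ` has `H ξ ≥ c`, since otherwise a low walk to
its neighbour, extended by one edge, would put `ξ` in `Vᵢ`; on the other hand `H < c` on `Vᵢ`.
Finally, the other plateaux lie outside `Vᵢ`.
-/

namespace List

variable {α : Type*} [LinearOrder α]

theorem foldr_max_le_iff {l : List α} {b c : α} :
    l.foldr max b ≤ c ↔ b ≤ c ∧ ∀ x ∈ l, x ≤ c := by
  induction l with
  | nil => simp
  | cons x t ih => simp only [foldr_cons, max_le_iff, ih, mem_cons, forall_eq_or_imp]; tauto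

theorem foldr_max_mem (l : List α) (b : α) : l.foldr max b ∈ b :: l := by
  induction l with
  | nil => simp
  | cons x t ih =>
    rcases max_choice x (t.foldr max b) with h | h <;> simp only [foldr_cons, h] at ih ⊢
    · simp
    · rcases mem_cons.mp ih with h' | h' <;> simp [h']

end List

section WalkHeight

variable {G : SimpleGraph Ω} {H : Ω → ℝ} {a b : Ω}

theorem walkHeight_le_iff (w : G.Walk a b) {c : ℝ} :
    walkHeight H w ≤ c ↔ ∀ x ∈ w.support, H x ≤ c := by
  simp only [walkHeight, List.foldr_max_le_iff, List.forall_mem_map]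
  exact ⟨fun h => h.2, fun h => ⟨h b w.end_mem_support, h⟩⟩

theorem le_walkHeight (w : G.Walk a b) {x : Ω} (hx : x ∈ w.support) : H x ≤ walkHeight H w :=
  (walkHeight_le_iff w).mp le_rfl x hx

theorem walkHeight_mem_range (w : G.Walk a b) : walkHeight H w ∈ Set.range H := by
  rcases List.mem_cons.mp (List.foldr_max_mem (w.support.map H) (H b)) with h | h
  · exact ⟨b, h.symm⟩
  · obtain ⟨x, -, hx⟩ := List.mem_map.mp h
    exact ⟨x, hx⟩

@[simp]
theorem walkHeight_nil (a : Ω) : walkHeight H (Walk.nil : G.Walk a a) = H a := by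
  simp [walkHeight]

theorem walkHeight_takeUntil_le [DecidableEq Ω] (w : G.Walk a b) {x : Ω} (hx : x ∈ w.support) :
    walkHeight H (w.takeUntil x hx) ≤ walkHeight H w :=
  (walkHeight_le_iff _).mpr fun _ hy =>
    le_walkHeight w (w.support_takeUntil_subset_support hx hy)

theorem walkHeight_concat_le (w : G.Walk a b) {c : Ω} (hbc : G.Adj b c) :
    walkHeight H (w.concat hbc) ≤ max (walkHeight H w) (H c) := by
  refine (walkHeight_le_iff _).mpr fun x hx => ?_
  rw [Walk.support_concat, List.mem_append, List.mem_singleton] at hx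
  rcases hx with hx | rfl
  · exact le_max_of_le_left (le_walkHeight w hx)
  · exact le_max_right _ _

end WalkHeight

section CommHeight

variable [Finite Ω] {G : SimpleGraph Ω} {H : Ω → ℝ} {A B : Set Ω} {a b η : Ω}

theorem finite_walkHeights : {x | ∃ w : G.Walk a b, walkHeight H w = x}.Finite :=
  (Set.finite_range H).subset (Set.range_subset_iff.mpr walkHeight_mem_range)

theorem commHeight_le_walkHeight (w : G.Walk a b) : commHeight G H a b ≤ walkHeight H w :=
  csInf_le finite_walkHeights.bddBelow ⟨w, rfl⟩

theorem exists_walkHeight_eq_commHeight (h : G.Reachable a b) :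
    ∃ w : G.Walk a b, walkHeight H w = commHeight G H a b := by
  have hne : {x | ∃ w : G.Walk a b, walkHeight H w = x}.Nonempty := ⟨_, h.some, rfl⟩
  exact hne.csInf_mem finite_walkHeights

theorem commHeightSet_le_commHeight (ha : a ∈ A) (hb : b ∈ B) :
    commHeightSet G H A B ≤ commHeight G H a b :=
  csInf_le ((A.toFinite.image2 _ B.toFinite).bddBelow) ⟨a, ha, b, hb, rfl⟩

theorem exists_commHeight_eq_commHeightSet (hA : A.Nonempty) (hB : B.Nonempty) :
    ∃ a ∈ A, ∃ b ∈ B, commHeight G H a b = commHeightSet G H A B :=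
  (hA.image2 hB).csInf_mem (A.toFinite.image2 _ B.toFinite)

theorem commHeightSet_le_commHeightSet_singleton (hA : A.Nonempty) (hb : b ∈ B) :
    commHeightSet G H A B ≤ commHeightSet G H A {b} := by
  obtain ⟨a, ha, _, rfl, hab⟩ := exists_commHeight_eq_commHeightSet (G := G) (H := H) hA
    (Set.singleton_nonempty b)
  exact hab ▸ commHeightSet_le_commHeight ha hb

theorem commHeightSet_singleton_le_walkHeight (ha : a ∈ A) (w : G.Walk a η) :
    commHeightSet G H A {η} ≤ walkHeight H w :=
  (commHeightSet_le_commHeight ha (Set.mem_singleton η)).trans (commHeight_le_walkHeight w)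

theorem exists_walkHeight_eq_commHeightSet_singleton (hG : G.Preconnected) (hA : A.Nonempty)
    (η : Ω) : ∃ a ∈ A, ∃ w : G.Walk a η, walkHeight H w = commHeightSet G H A {η} := by
  obtain ⟨a, ha, _, rfl, hab⟩ := exists_commHeight_eq_commHeightSet (G := G) (H := H) hA
    (Set.singleton_nonempty η)
  obtain ⟨w, hw⟩ := exists_walkHeight_eq_commHeight (H := H) (hG a _)
  exact ⟨a, ha, w, hw.trans hab⟩

theorem le_commHeightSet_singleton (hG : G.Preconnected) (hA : A.Nonempty) (η : Ω) :
    H η ≤ commHeightSet G H A {η} := by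
  obtain ⟨a, -, w, hw⟩ := exists_walkHeight_eq_commHeightSet_singleton (H := H) hG hA η
  exact hw ▸ le_walkHeight w w.end_mem_support

theorem commHeightSet_singleton_le_self (ha : a ∈ A) : commHeightSet G H A {a} ≤ H a := by
  simpa using commHeightSet_singleton_le_walkHeight (H := H) ha (Walk.nil : G.Walk a a)

theorem commHeightSet_singleton_le_max (hG : G.Preconnected) (hA : A.Nonempty) {ξ : Ω}
    (hηξ : G.Adj η ξ) :
    commHeightSet G H A {ξ} ≤ max (commHeightSet G H A {η}) (H ξ) := by
  obtain ⟨a, ha, w, hw⟩ := exists_walkHeight_eq_commHeightSet_singleton (H := H) hG hA η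
  calc commHeightSet G H A {ξ} ≤ walkHeight H (w.concat hηξ) :=
        commHeightSet_singleton_le_walkHeight ha _
    _ ≤ max (commHeightSet G H A {η}) (H ξ) := hw ▸ walkHeight_concat_le w hηξ

end CommHeight

def valley (G : SimpleGraph Ω) (H : Ω → ℝ) (A : Set Ω) (c : ℝ) : Set Ω :=
  {η | commHeightSet G H A {η} < c}

section Valley

variable [Finite Ω] {G : SimpleGraph Ω} {H : Ω → ℝ} {A : Set Ω} {c : ℝ}

theorem subset_valley (hA : ∀ a ∈ A, H a < c) : A ⊆ valley G H A c :=
  fun a ha => (commHeightSet_singleton_le_self ha).trans_lt (hA a ha)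

theorem support_subset_valley {a η : Ω} (ha : a ∈ A) (w : G.Walk a η)
    (hw : walkHeight H w < c) : {x | x ∈ w.support} ⊆ valley G H A c := by
  classical
  intro x hx
  exact (commHeightSet_singleton_le_walkHeight ha _).trans_lt
    ((walkHeight_takeUntil_le w hx).trans_lt hw)

theorem connected_induce_valley (hG : G.Preconnected) (hA : (G.induce A).Connected)
    (hAc : ∀ a ∈ A, H a < c) : (G.induce (valley G H A c)).Connected := by
  obtain ⟨⟨a₀, ha₀⟩⟩ := hA.nonempty
  refine induce_connected_of_patches a₀ (subset_valley hAc ha₀) fun {η} hη => ?_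
  obtain ⟨a, ha, w, hw⟩ :=
    exists_walkHeight_eq_commHeightSet_singleton (H := H) hG ⟨a₀, ha₀⟩ η
  have hpatch : (G.induce (A ∪ {x | x ∈ w.support})).Connected :=
    induce_union_connected hA.preconnected w.connected_induce_support.preconnected
      ⟨a, ha, w.start_mem_support⟩
  exact ⟨_, Set.union_subset (subset_valley hAc) (support_subset_valley ha w (hw ▸ hη)),
    Or.inl ha₀, Or.inr w.end_mem_support, hpatch.preconnected _ _⟩

theorem lt_of_mem_valley_of_mem_outerBoundary (hG : G.Preconnected) (hA : A.Nonempty) {η ξ : Ω}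
    (hη : η ∈ valley G H A c) (hξ : ξ ∈ outerBoundary G (valley G H A c)) : H η < H ξ := by
  obtain ⟨hξV, η', hη'V, hξη'⟩ := hξ
  have hcξ : c ≤ max (commHeightSet G H A {η'}) (H ξ) :=
    (not_lt.mp hξV).trans (commHeightSet_singleton_le_max hG hA hξη'.symm)
  calc H η ≤ commHeightSet G H A {η} := le_commHeightSet_singleton hG hA η
    _ < c := hη
    _ ≤ H ξ := (le_max_iff.mp hcξ).resolve_left (not_le.mpr hη'V)

theorem isCycleSet_valley (hG : G.Preconnected) (hA : (G.induce A).Connected)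
    (hAc : ∀ a ∈ A, H a < c) {x : Ω} (hx : c ≤ commHeightSet G H A {x}) :
    IsCycleSet G H (valley G H A c) := by
  have hAne : A.Nonempty := Set.nonempty_coe_sort.mp hA.nonempty
  refine ⟨hAne.mono (subset_valley hAc), connected_induce_valley hG hA hAc, ?_,
    fun η hη ξ hξ => lt_of_mem_valley_of_mem_outerBoundary hG hAne hη hξ⟩
  exact fun h => (h ▸ Set.mem_univ x : x ∈ valley G H A c).not_ge hx

end Valley

namespace IsStablePlateau

variable {G : SimpleGraph Ω} {H : Ω → ℝ} {P Q : Set Ω}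

theorem subset_of_mem (hP : IsStablePlateau G H P) (hQ : IsStablePlateau G H Q) {x : Ω}
    (hxP : x ∈ P) (hxQ : x ∈ Q) : P ⊆ Q := by
  intro y hyP
  by_contra hyQ
  obtain ⟨w⟩ := hP.2.1.preconnected ⟨x, hxP⟩ ⟨y, hyP⟩
  set w' := w.map (Embedding.induce P).toHom
  obtain ⟨d, hd, hdQ, hd'Q⟩ := w'.exists_boundary_dart Q hxQ hyQ
  have hsupp : ∀ z ∈ w'.support, z ∈ P := by
    simp only [w', Walk.support_map, List.mem_map]
    rintro _ ⟨z, -, rfl⟩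
    exact z.2
  have hfst := hsupp _ (Walk.dart_fst_mem_support_of_mem_darts _ hd)
  have hsnd := hsupp _ (Walk.dart_snd_mem_support_of_mem_darts _ hd)
  exact (hQ.2.2.2 _ hdQ _ ⟨hd'Q, _, hdQ, d.adj.symm⟩).ne (hP.2.2.1 _ hfst _ hsnd)

theorem eq_of_mem (hP : IsStablePlateau G H P) (hQ : IsStablePlateau G H Q) {x : Ω}
    (hxP : x ∈ P) (hxQ : x ∈ Q) : P = Q :=
  (hP.subset_of_mem hQ hxP hxQ).antisymm (hQ.subset_of_mem hP hxQ hxP)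

theorem lt_commHeightSet [Finite Ω] (hP : IsStablePlateau G H P) (hG : G.Preconnected)
    {B : Set Ω} (hB : B.Nonempty) (hPB : Disjoint P B) {a : Ω} (ha : a ∈ P) :
    H a < commHeightSet G H P B := by
  obtain ⟨a', ha', b, hb, hab⟩ :=
    exists_commHeight_eq_commHeightSet (G := G) (H := H) ⟨a, ha⟩ hB
  obtain ⟨w, hw⟩ := exists_walkHeight_eq_commHeight (H := H) (hG a' b)
  obtain ⟨d, hd, hdP, hd'P⟩ := w.exists_boundary_dart P ha' (Set.disjoint_right.mp hPB hb)
  calc H a = H d.fst := hP.2.2.1 a ha _ hdP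
    _ < H d.snd := hP.2.2.2 _ hdP _ ⟨hd'P, _, hdP, d.adj.symm⟩
    _ ≤ walkHeight H w := le_walkHeight w (w.dart_snd_mem_support_of_mem_darts hd)
    _ = commHeightSet G H P B := hw.trans hab

end IsStablePlateau

theorem valleys_are_cycles_general [Fintype Ω] (G : SimpleGraph Ω) (hG : G.Connected) (H : Ω → ℝ)
    (ν : ℕ) (hν : 2 ≤ ν) (P : Fin ν → Set Ω)
    (hP : ∀ i, IsStablePlateau G H (P i))
    (hPinj : Function.Injective P)
    (p : Fin ν → Ω)
    (Γ : Fin ν → ℝ)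
    (hΓ : ∀ i, Γ i = commHeightSet G H (P i) {x | ∃ j, j ≠ i ∧ x ∈ P j} - H (p i))
    (V : Fin ν → Set Ω)
    (hV : ∀ i, V i = {η | commHeightSet G H (P i) {η} - H (p i) < Γ i}) :
    ∀ i, IsCycleSet G H (V i) := by
  intro i
  have hVi : V i = valley G H (P i) (commHeightSet G H (P i) {x | ∃ j, j ≠ i ∧ x ∈ P j}) := by
    ext η
    simp only [hV i, hΓ i, valley, Set.mem_ofPred_eq, sub_lt_sub_iff_right]
  have : Nontrivial (Fin ν) := Fin.nontrivial_iff_two_le.mpr hν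
  obtain ⟨j, hji⟩ := exists_ne i
  obtain ⟨x, hxj⟩ := (hP j).1
  have hx : x ∈ {y | ∃ k, k ≠ i ∧ y ∈ P k} := ⟨j, hji, hxj⟩
  have hdisj : Disjoint (P i) {y | ∃ k, k ≠ i ∧ y ∈ P k} :=
    Set.disjoint_right.mpr fun y ⟨k, hki, hyk⟩ hyi => hki (hPinj ((hP k).eq_of_mem (hP i) hyk hyi))
  rw [hVi]
  exact isCycleSet_valley hG.preconnected (hP i).2.1
    (fun a ha => (hP i).lt_commHeightSet hG.preconnected ⟨x, hx⟩ hdisj ha)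
    (commHeightSet_le_commHeightSet_singleton (hP i).1 hx)

/-- each valley `Vᵢ` is a cycle. -/
theorem valleys_are_cycles [Fintype Ω] (G : SimpleGraph Ω) (hG : G.Connected) (H : Ω → ℝ)
    (ν : ℕ) (hν : 2 ≤ ν) (P : Fin ν → Set Ω)
    (hP : ∀ i, IsStablePlateau G H (P i))
    (hPinj : Function.Injective P)
    (hPall : ∀ Q : Set Ω, IsStablePlateau G H Q → ∃ i, Q = P i)
    (p : Fin ν → Ω) (hp : ∀ i, p i ∈ P i)
    (Γ : Fin ν → ℝ)
    (hΓ : ∀ i, Γ i = commHeightSet G H (P i) {x | ∃ j, j ≠ i ∧ x ∈ P j} - H (p i))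
    (V : Fin ν → Set Ω)
    (hV : ∀ i, V i = {η | commHeightSet G H (P i) {η} - H (p i) < Γ i}) :
    ∀ i, IsCycleSet G H (V i) :=
  valleys_are_cycles_general G hG H ν hν P hP hPinj p Γ hΓ V hV
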